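/- arXiv:1808.10091 — 2 statements merged into one kernel-verified Lean document; each statement's English description precedes it below -/
import Mathlib

section
/- Suppose that for some N ≥ 1 all entries of the matrix power M^N are positive. Then the shift f on X is topologically mixing in the following sense: for all x, z ∈ X and every m ∈ ℕ there exists N' ∈ ℕ such that for every n ≥ N' there is a point y ∈ X with y_i = x_i for all |i| ≤ m and (f^n y)_i = z_i for all |i| ≤ m. -/
open scoped Classical

/-- The subshift of finite type determined by a 0-1 transition matrix `M`:
the set of two-sided sequences all of whose transitions are allowed by `M`. -/
def SFT {k : ℕ} (M : Matrix (Fin k) (Fin k) ℕ) : Set (ℤ → Fin k) :=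
  {x | ∀ n : ℤ, M (x n) (x (n + 1)) = 1}

/-- The (left) shift map `(f x)_n = x_{n+1}`. -/
def shift {k : ℕ} (x : ℤ → Fin k) : ℤ → Fin k := fun n => x (n + 1)

/-- `sep x y = min {|i| : x_i ≠ y_i}` (defined for `x ≠ y`). -/
noncomputable def sep {k : ℕ} (x y : ℤ → Fin k) : ℕ :=
  sInf {m : ℕ | ∃ i : ℤ, i.natAbs = m ∧ x i ≠ y i}

/-- The distance `d(x,y) = λ^{sep x y}` for `x ≠ y`, and `d(x,x) = 0`. -/
noncomputable def dSFT {k : ℕ} (lam : ℝ) (x y : ℤ → Fin k) : ℝ :=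
  if x = y then 0 else lam ^ sep x y

lemma shift_iter {k : ℕ} (n : ℕ) (y : ℤ → Fin k) (i : ℤ) :
    (shift^[n] y) i = y (i + n) := by
  induction n generalizing i with
  | zero => simp
  | succ n ih =>
    rw [Function.iterate_succ_apply']
    show (shift^[n] y) (i + 1) = y (i + (n + 1))
    rw [ih]; ring_nf

/-- From a positive entry of `M ^ L`, extract a path of length `L`. -/
lemma path_of_pos {k : ℕ} (M : Matrix (Fin k) (Fin k) ℕ)
    (hM : ∀ i j, M i j = 0 ∨ M i j = 1) :
    ∀ L (i j : Fin k), 0 < (M ^ L) i j →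
      ∃ p : ℕ → Fin k, p 0 = i ∧ p L = j ∧ ∀ t, t < L → M (p t) (p (t + 1)) = 1 := by
  intro L
  induction L with
  | zero =>
    intro i j h
    simp only [pow_zero, Matrix.one_apply] at h
    split_ifs at h with hij
    · exact ⟨fun _ => i, rfl, hij ▸ rfl, fun t ht => absurd ht (by omega)⟩
    · omega
  | succ L ih =>
    intro i j h
    rw [pow_succ, Matrix.mul_apply] at h
    obtain ⟨l, -, hl⟩ := Finset.exists_ne_zero_of_sum_ne_zero h.ne'
    have h1 : 0 < (M ^ L) i l := Nat.pos_of_ne_zero (by intro h0; simp [h0] at hl)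
    have h2 : M l j = 1 := by
      rcases hM l j with h0 | h0
      · simp [h0] at hl
      · exact h0
    obtain ⟨p, hp0, hpL, hpe⟩ := ih i l h1
    refine ⟨fun t => if t ≤ L then p t else j, by simp [hp0], by simp, ?_⟩
    intro t ht
    rcases Nat.lt_or_ge t L with h' | h'
    · simp only [if_pos h'.le, if_pos (by omega : t + 1 ≤ L)]
      exact hpe t h'
    · have ht' : t = L := by omega
      subst ht'
      simp only [if_pos le_rfl, if_neg (by omega : ¬ t + 1 ≤ t), hpL, h2]

/-- If `M ^ N` is positive with `N ≥ 1` then `M ^ L` is positive for all `L ≥ N`. -/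
lemma pow_pos_of_le {k : ℕ} (hk : 1 ≤ k) (M : Matrix (Fin k) (Fin k) ℕ)
    (N : ℕ) (hN : 1 ≤ N) (hmix : ∀ i j, 0 < (M ^ N) i j) :
    ∀ d, ∀ i j, 0 < (M ^ (N + d)) i j := by
  have : Nonempty (Fin k) := ⟨⟨0, hk⟩⟩
  -- every state has a predecessor
  have hpred : ∀ j : Fin k, ∃ l, 0 < M l j := by
    intro j
    obtain ⟨i⟩ := this
    have h := hmix i j
    obtain ⟨N', rfl⟩ : ∃ N', N = N' + 1 := ⟨N - 1, by omega⟩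
    rw [pow_succ, Matrix.mul_apply] at h
    obtain ⟨l, -, hl⟩ := Finset.exists_ne_zero_of_sum_ne_zero h.ne'
    exact ⟨l, Nat.pos_of_ne_zero (by intro h0; simp [h0] at hl)⟩
  intro d
  induction d with
  | zero => simpa using hmix
  | succ d ih =>
    intro i j
    obtain ⟨l, hl⟩ := hpred j
    have : 0 < (M ^ (N + d)) i l * M l j := Nat.mul_pos (ih i l) hl
    calc 0 < (M ^ (N + d)) i l * M l j := this
      _ ≤ ∑ l', (M ^ (N + d)) i l' * M l' j :=
          Finset.single_le_sum (f := fun l' => (M ^ (N + d)) i l' * M l' j)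
            (fun _ _ => Nat.zero_le _) (Finset.mem_univ l)
      _ = (M ^ (N + d + 1)) i j := by rw [pow_succ, Matrix.mul_apply]

/-- If all entries of `M^N` are positive for some `N ≥ 1`, then the shift on the
subshift of finite type is topologically mixing: any two cylinders can be joined
by every sufficiently long transition. -/
theorem stmt_6 (k : ℕ) (hk : 1 ≤ k) (M : Matrix (Fin k) (Fin k) ℕ)
    (hM : ∀ i j, M i j = 0 ∨ M i j = 1)
    (N : ℕ) (hN : 1 ≤ N) (hmix : ∀ i j, 0 < (M ^ N) i j) :
    ∀ x ∈ SFT M, ∀ z ∈ SFT M, ∀ m : ℕ, ∃ N' : ℕ, ∀ n : ℕ, N' ≤ n →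
      ∃ y ∈ SFT M, (∀ i : ℤ, i.natAbs ≤ m → y i = x i) ∧
        (∀ i : ℤ, i.natAbs ≤ m → (shift^[n] y) i = z i) := by
  intro x hx z hz m
  refine ⟨2 * m + N, fun n hn => ?_⟩
  set L : ℕ := n - 2 * m with hL
  have hLN : N ≤ L := by omega
  have hnL : (n : ℤ) = 2 * m + L := by omega
  -- a path of length L from x m to z (-m)
  have hpos : 0 < (M ^ L) (x m) (z (-(m : ℤ))) := by
    have := pow_pos_of_le hk M N hN hmix (L - N) (x m) (z (-(m : ℤ)))
    rwa [show N + (L - N) = L by omega] at this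
  obtain ⟨p, hp0, hpL, hpe⟩ := path_of_pos M hM L (x m) (z (-(m : ℤ))) hpos
  set y : ℤ → Fin k := fun j =>
    if j < (m : ℤ) then x j else if j ≤ (m : ℤ) + L then p (j - m).toNat else z (j - n)
    with hy
  -- value of y on the right region
  have hright : ∀ j : ℤ, (m : ℤ) + L ≤ j → y j = z (j - n) := by
    intro j hj
    rcases eq_or_lt_of_le hj with hj' | hj'
    · have : ¬ j < (m : ℤ) := by omega
      simp only [hy, if_neg this, if_pos hj'.symm.le]
      have h1 : (j - m).toNat = L := by omega
      have h2 : j - n = -(m : ℤ) := by omega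
      rw [h1, hpL, h2]
    · simp only [hy, if_neg (by omega : ¬ j < (m : ℤ)), if_neg (by omega : ¬ j ≤ (m : ℤ) + L)]
  -- value of y on the left region
  have hleft : ∀ j : ℤ, j ≤ (m : ℤ) → y j = x j := by
    intro j hj
    rcases eq_or_lt_of_le hj with hj' | hj'
    · subst hj'
      simp only [hy, if_neg (lt_irrefl _), if_pos (by omega : (m : ℤ) ≤ (m : ℤ) + L)]
      simpa using hp0
    · simp only [hy, if_pos hj']
  refine ⟨y, ?_, fun i hi => hleft i (by omega), fun i hi => ?_⟩
  · -- y ∈ SFT M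
    intro j
    rcases lt_trichotomy j (m : ℤ) with hj | hj | hj
    · -- left region
      rw [hleft j hj.le, hleft (j + 1) (by omega)]
      exact hx j
    · -- j = m boundary handled by middle/right cases below via path if L ≥ 1
      subst hj
      rw [hleft (m : ℤ) le_rfl]
      rcases Nat.lt_or_ge 0 L with hL1 | hL1
      · have : y ((m : ℤ) + 1) = p 1 := by
          simp only [hy, if_neg (by omega : ¬ (m : ℤ) + 1 < (m : ℤ)),
            if_pos (by omega : (m : ℤ) + 1 ≤ (m : ℤ) + L)]
          congr 1
          omega
        rw [this, ← hp0]
        exact hpe 0 hL1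
      · omega  -- L ≥ N ≥ 1
    · rcases Nat.lt_or_ge ((j : ℤ) - m).toNat L with hmid | hr
      · -- middle region: both via path
        have hj1 : j ≤ (m : ℤ) + L := by omega
        have hj2 : j + 1 ≤ (m : ℤ) + L := by omega
        have e1 : y j = p (j - m).toNat := by
          simp only [hy, if_neg (by omega : ¬ j < (m : ℤ)), if_pos hj1]
        have e2 : y (j + 1) = p ((j - m).toNat + 1) := by
          simp only [hy, if_neg (by omega : ¬ j + 1 < (m : ℤ)), if_pos hj2]
          congr 1
          omega
        rw [e1, e2]
        exact hpe _ hmid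
      · -- right region
        have hj1 : (m : ℤ) + L ≤ j := by omega
        rw [hright j hj1, hright (j + 1) (by omega)]
        have : j - n + 1 = j + 1 - n := by ring
        rw [← this]
        exact hz (j - n)
  · -- (shift^[n] y) i = z i for |i| ≤ m
    rw [shift_iter]
    have : (m : ℤ) + L ≤ i + n := by omega
    rw [hright _ this]
    congr 1
    omega
end

section
/- Let A : X → GL(d,ℝ) satisfy: (i) A is β-Hölder, i.e. there are c₀ > 0 and β ∈ (0,1] with ‖A(x) − A(y)‖ ≤ c₀ d(x,y)^β for all x, y ∈ X; and (ii) for every ε > 0 there is K_ε ≥ 1 such that ‖𝒜ⁿ_x‖ ≤ K_ε e^{εn} and ‖(𝒜ⁿ_x)^{−1}‖ ≤ K_ε e^{εn} for all x ∈ X and n ∈ ℕ. Then there is a constant C such that for every x ∈ X and every y ∈ W^s_loc(x): the limit H^s_{x,y} = lim_{n→∞} (𝒜ⁿ_y)^{−1} 𝒜ⁿ_x exists in GL(d,ℝ), and ‖(𝒜ⁿ_y)^{−1} 𝒜ⁿ_x − I‖ ≤ C d(x,y)^β for all n ∈ ℕ; in particular ‖H^s_{x,y} − I‖ ≤ C d(x,y)^β.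 -/
open scoped Classical

open scoped MatrixGroups Matrix.Norms.L2Operator

/-- The `GL(d,ℝ)`-valued cocycle generated by `A` over the shift:
`𝒜⁰_x = I` and `𝒜ⁿ⁺¹_x = A(fⁿx) · 𝒜ⁿ_x`. -/
def coc {k d : ℕ} (A : (ℤ → Fin k) → GL (Fin d) ℝ) :
    (ℤ → Fin k) → ℕ → GL (Fin d) ℝ
  | _, 0 => 1
  | x, n + 1 => A (shift^[n] x) * coc A x n

/-!
Write `Hₙ = (𝒜ⁿ_y)⁻¹ 𝒜ⁿ_x`. Then `Hₙ₊₁ - Hₙ = (𝒜ⁿ_y)⁻¹ A(fⁿy)⁻¹ (A(fⁿx) - A(fⁿy)) 𝒜ⁿ_x`.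
Since `y ∈ W^s_loc(x)`, the shift contracts `d(fⁿx, fⁿy) ≤ λⁿ d(x, y)`, so by Hölder continuity
the middle factor is `O((λ^β)ⁿ d(x,y)^β)`, while the sub-exponential growth bounds the outer
factors by `K² e^{εn}`. Choosing `ε` with `e^ε λ^β < 1` makes the increments geometrically small,
so `Hₙ` is Cauchy and stays within `C d(x,y)^β` of `H₀ = I`. The limit is invertible because the
inverses `Hₙ⁻¹` are the approximants for the swapped pair `(y, x)`, which converge as well.
-/

open Filter Topology

lemma shift_iterate_apply {k : ℕ} (x : ℤ → Fin k) (n : ℕ) (i : ℤ) :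
    shift^[n] x i = x (i + n) := by
  induction n generalizing x with
  | zero => simp
  | succ n ih =>
    rw [Function.iterate_succ_apply, ih, shift, Nat.cast_succ, add_assoc, add_comm (n : ℤ)]

lemma shift_iterate_mem_SFT {k : ℕ} {M : Matrix (Fin k) (Fin k) ℕ} {x : ℤ → Fin k}
    (hx : x ∈ SFT M) (n : ℕ) : shift^[n] x ∈ SFT M := by
  induction n with
  | zero => exact hx
  | succ n ih =>
    rw [Function.iterate_succ_apply']
    exact fun m => ih (m + 1)

lemma dSFT_nonneg {k : ℕ} {lam : ℝ} (h : 0 ≤ lam) (x y : ℤ → Fin k) : 0 ≤ dSFT lam x y := by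
  unfold dSFT
  split_ifs
  exacts [le_rfl, pow_nonneg h _]

lemma add_sep_le_sep_shift_iterate {k : ℕ} {x y : ℤ → Fin k}
    (hxy : ∀ i : ℤ, 0 ≤ i → y i = x i) (n : ℕ) (hne : shift^[n] x ≠ shift^[n] y) :
    n + sep x y ≤ sep (shift^[n] x) (shift^[n] y) := by
  obtain ⟨i₀, hi₀⟩ := Function.ne_iff.mp hne
  refine le_csInf ⟨i₀.natAbs, i₀, rfl, hi₀⟩ ?_
  rintro m ⟨i, rfl, hi⟩
  rw [shift_iterate_apply, shift_iterate_apply] at hi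
  have hneg : i + n < 0 := by
    by_contra h
    exact hi (hxy _ (not_lt.mp h)).symm
  have hsep : sep x y ≤ (i + n).natAbs := Nat.sInf_le ⟨i + n, rfl, hi⟩
  omega

lemma dSFT_shift_iterate_le {k : ℕ} {lam : ℝ} (h0 : 0 ≤ lam) (h1 : lam ≤ 1)
    {x y : ℤ → Fin k} (hxy : ∀ i : ℤ, 0 ≤ i → y i = x i) (n : ℕ) :
    dSFT lam (shift^[n] x) (shift^[n] y) ≤ lam ^ n * dSFT lam x y := by
  by_cases hn : shift^[n] x = shift^[n] y
  · rw [dSFT, if_pos hn]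
    exact mul_nonneg (pow_nonneg h0 n) (dSFT_nonneg h0 x y)
  · have hne : x ≠ y := by rintro rfl; exact hn rfl
    rw [dSFT, if_neg hn, dSFT, if_neg hne, ← pow_add]
    exact pow_le_pow_of_le_one h0 h1 (add_sep_le_sep_shift_iterate hxy n hn)

lemma norm_sub_shift_iterate_le {k : ℕ} {M : Matrix (Fin k) (Fin k) ℕ} {E : Type*}
    [SeminormedAddCommGroup E] {F : (ℤ → Fin k) → E} {lam c₀ β : ℝ}
    (hF : ∀ x ∈ SFT M, ∀ y ∈ SFT M, ‖F x - F y‖ ≤ c₀ * dSFT lam x y ^ β)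
    (hc₀ : 0 ≤ c₀) (hβ : 0 ≤ β) (h0 : 0 ≤ lam) (h1 : lam ≤ 1)
    {x y : ℤ → Fin k} (hx : x ∈ SFT M) (hy : y ∈ SFT M) (hxy : ∀ i : ℤ, 0 ≤ i → y i = x i)
    (n : ℕ) :
    ‖F (shift^[n] x) - F (shift^[n] y)‖ ≤ c₀ * ((lam ^ β) ^ n * dSFT lam x y ^ β) := by
  refine (hF _ (shift_iterate_mem_SFT hx n) _ (shift_iterate_mem_SFT hy n)).trans ?_
  gcongr
  calc dSFT lam (shift^[n] x) (shift^[n] y) ^ β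
      ≤ (lam ^ n * dSFT lam x y) ^ β :=
        Real.rpow_le_rpow (dSFT_nonneg h0 _ _) (dSFT_shift_iterate_le h0 h1 hxy n) hβ
    _ = (lam ^ β) ^ n * dSFT lam x y ^ β := by
        rw [Real.mul_rpow (pow_nonneg h0 n) (dSFT_nonneg h0 x y), Real.rpow_pow_comm h0]

lemma Units.val_inv_mul_mul_sub {R : Type*} [Ring R] (a b u v : Rˣ) :
    (((v * b)⁻¹ * (u * a) : Rˣ) : R) - ((b⁻¹ * a : Rˣ) : R)
      = ↑b⁻¹ * (↑v⁻¹ * (↑u - ↑v)) * ↑a := by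
  simp only [mul_inv_rev, Units.val_mul, mul_sub, sub_mul, mul_sub, Units.inv_mul, mul_one,
    mul_assoc]

lemma Units.norm_inv_mul_mul_sub_le {R : Type*} [NormedRing R] (a b u v : Rˣ) :
    ‖(((v * b)⁻¹ * (u * a) : Rˣ) : R) - ((b⁻¹ * a : Rˣ) : R)‖
      ≤ ‖(↑b⁻¹ : R)‖ * (‖(↑v⁻¹ : R)‖ * ‖(↑u - ↑v : R)‖) * ‖(a : R)‖ := by
  rw [Units.val_inv_mul_mul_sub]
  refine (norm_mul_le _ _).trans ?_
  gcongr
  exact (norm_mul_le _ _).trans (by gcongr; exact norm_mul_le _ _)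

lemma dist_le_of_le_geometric {α : Type*} [PseudoMetricSpace α] {r C : ℝ} {f : ℕ → α}
    (hr : r < 1) (hu : ∀ n, dist (f n) (f (n + 1)) ≤ C * r ^ n) (n : ℕ) :
    dist (f 0) (f n) ≤ C / (1 - r) := by
  refine (dist_le_range_sum_of_dist_le (f := f) n fun _ => hu _).trans ?_
  exact sum_le_hasSum (Finset.range n) (fun i _ => dist_nonneg.trans (hu i))
    (aux_hasSum_of_le_geometric hr hu)

lemma Units.exists_val_eq_of_tendsto {ι M : Type*} [Monoid M] [TopologicalSpace M]
    [ContinuousMul M] [T2Space M] {l : Filter ι} [l.NeBot] {u : ι → Mˣ} {a b : M}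
    (ha : Tendsto (fun i => (u i : M)) l (𝓝 a)) (hb : Tendsto (fun i => (↑(u i)⁻¹ : M)) l (𝓝 b)) :
    ∃ U : Mˣ, (U : M) = a :=
  ⟨⟨a, b, tendsto_nhds_unique (ha.mul hb) (by simp), tendsto_nhds_unique (hb.mul ha) (by simp)⟩,
    rfl⟩

lemma Real.exists_pos_exp_mul_lt_one {ρ : ℝ} (hρ : ρ < 1) : ∃ ε > 0, Real.exp ε * ρ < 1 := by
  have h : Tendsto (fun ε => Real.exp ε * ρ) (𝓝[>] 0) (𝓝 ρ) :=
    ((Real.continuous_exp.mul continuous_const).tendsto' 0 ρ (by simp)).mono_left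
      nhdsWithin_le_nhds
  obtain ⟨ε, hε, hpos⟩ := ((h.eventually (gt_mem_nhds hρ)).and self_mem_nhdsWithin).exists
  exact ⟨ε, hpos, hε⟩

section Holonomy

variable {k d : ℕ}

def holonomyApprox (A : (ℤ → Fin k) → GL (Fin d) ℝ) (x y : ℤ → Fin k) (n : ℕ) :
    GL (Fin d) ℝ :=
  (coc A y n)⁻¹ * coc A x n

lemma holonomyApprox_zero (A : (ℤ → Fin k) → GL (Fin d) ℝ) (x y : ℤ → Fin k) :
    holonomyApprox A x y 0 = 1 := by
  simp [holonomyApprox, coc]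

lemma holonomyApprox_inv (A : (ℤ → Fin k) → GL (Fin d) ℝ) (x y : ℤ → Fin k) (n : ℕ) :
    (holonomyApprox A x y n)⁻¹ = holonomyApprox A y x n := by
  simp [holonomyApprox]

lemma coc_one (A : (ℤ → Fin k) → GL (Fin d) ℝ) (x : ℤ → Fin k) : coc A x 1 = A x := by
  simp [coc]

lemma exists_dist_holonomyApprox_le_geometric {M : Matrix (Fin k) (Fin k) ℕ} {lam : ℝ}
    (hlam0 : 0 < lam) (hlam1 : lam < 1) {A : (ℤ → Fin k) → GL (Fin d) ℝ} {c₀ β : ℝ}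
    (hc₀ : 0 ≤ c₀) (hβ0 : 0 < β)
    (hHolder : ∀ x ∈ SFT M, ∀ y ∈ SFT M,
      ‖(A x : Matrix (Fin d) (Fin d) ℝ) - (A y : Matrix (Fin d) (Fin d) ℝ)‖
        ≤ c₀ * dSFT lam x y ^ β)
    (hgrowth : ∀ ε : ℝ, 0 < ε → ∃ K : ℝ, 1 ≤ K ∧ ∀ x ∈ SFT M, ∀ n : ℕ,
      ‖(coc A x n : Matrix (Fin d) (Fin d) ℝ)‖ ≤ K * Real.exp (ε * n) ∧
      ‖(((coc A x n)⁻¹ : GL (Fin d) ℝ) : Matrix (Fin d) (Fin d) ℝ)‖ ≤ K * Real.exp (ε * n)) :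
    ∃ C r : ℝ, r < 1 ∧ ∀ x ∈ SFT M, ∀ y ∈ SFT M, (∀ i : ℤ, 0 ≤ i → y i = x i) → ∀ n : ℕ,
      dist (holonomyApprox A x y n : Matrix (Fin d) (Fin d) ℝ) (holonomyApprox A x y (n + 1))
        ≤ C * dSFT lam x y ^ β * r ^ n := by
  obtain ⟨ε, hε, hr⟩ := Real.exists_pos_exp_mul_lt_one (Real.rpow_lt_one hlam0.le hlam1 hβ0)
  obtain ⟨K, hK1, hK⟩ := hgrowth (ε / 2) (half_pos hε)
  have hK0 : 0 ≤ K := zero_le_one.trans hK1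
  have hAinv : ∀ z ∈ SFT M, ‖(((A z)⁻¹ : GL (Fin d) ℝ) : Matrix (Fin d) (Fin d) ℝ)‖
      ≤ K * Real.exp (ε / 2) := by
    intro z hz
    simpa [coc_one] using (hK z hz 1).2
  refine ⟨K * (K * Real.exp (ε / 2)) * K * c₀, Real.exp ε * lam ^ β, hr,
    fun x hx y hy hxy n => ?_⟩
  have hexp : Real.exp (ε / 2 * n) * Real.exp (ε / 2 * n) = Real.exp ε ^ n := by
    rw [← Real.exp_add, ← Real.exp_nat_mul]
    ring_nf
  rw [dist_comm, dist_eq_norm]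
  calc _ ≤ ‖(((coc A y n)⁻¹ : GL (Fin d) ℝ) : Matrix (Fin d) (Fin d) ℝ)‖ *
          (‖(((A (shift^[n] y))⁻¹ : GL (Fin d) ℝ) : Matrix (Fin d) (Fin d) ℝ)‖ *
            ‖(A (shift^[n] x) : Matrix (Fin d) (Fin d) ℝ) - A (shift^[n] y)‖) *
          ‖(coc A x n : Matrix (Fin d) (Fin d) ℝ)‖ :=
        Units.norm_inv_mul_mul_sub_le _ _ _ _
    _ ≤ K * Real.exp (ε / 2 * n) *
          (K * Real.exp (ε / 2) * (c₀ * ((lam ^ β) ^ n * dSFT lam x y ^ β))) *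
          (K * Real.exp (ε / 2 * n)) := by
        have hcy := (hK y hy n).2
        have hAy := hAinv _ (shift_iterate_mem_SFT hy n)
        have hAxy := norm_sub_shift_iterate_le hHolder hc₀ hβ0.le hlam0.le hlam1.le hx hy hxy n
        have hcx := (hK x hx n).1
        have hd : 0 ≤ dSFT lam x y ^ β := Real.rpow_nonneg (dSFT_nonneg hlam0.le x y) β
        gcongr
    _ = K * (K * Real.exp (ε / 2)) * K * c₀ * dSFT lam x y ^ β * (Real.exp ε * lam ^ β) ^ n := by
        rw [mul_pow, ← hexp]
        ring

end Holonomy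

theorem stmt_9_general (k d : ℕ) (M : Matrix (Fin k) (Fin k) ℕ)
    (lam : ℝ) (hlam0 : 0 < lam) (hlam1 : lam < 1)
    (A : (ℤ → Fin k) → GL (Fin d) ℝ)
    (c₀ β : ℝ) (hc₀ : 0 < c₀) (hβ0 : 0 < β)
    (hHolder : ∀ x ∈ SFT M, ∀ y ∈ SFT M,
      ‖(A x : Matrix (Fin d) (Fin d) ℝ) - (A y : Matrix (Fin d) (Fin d) ℝ)‖
        ≤ c₀ * dSFT lam x y ^ β)
    (hgrowth : ∀ ε : ℝ, 0 < ε → ∃ K : ℝ, 1 ≤ K ∧ ∀ x ∈ SFT M, ∀ n : ℕ,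
      ‖(coc A x n : Matrix (Fin d) (Fin d) ℝ)‖ ≤ K * Real.exp (ε * n) ∧
      ‖(((coc A x n)⁻¹ : GL (Fin d) ℝ) : Matrix (Fin d) (Fin d) ℝ)‖ ≤ K * Real.exp (ε * n)) :
    ∃ C : ℝ, ∀ x ∈ SFT M, ∀ y ∈ SFT M, (∀ i : ℤ, 0 ≤ i → y i = x i) →
      (∃ Hs : GL (Fin d) ℝ,
        Filter.Tendsto
          (fun n : ℕ => (((coc A y n)⁻¹ * coc A x n : GL (Fin d) ℝ) : Matrix (Fin d) (Fin d) ℝ))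
          Filter.atTop (nhds (Hs : Matrix (Fin d) (Fin d) ℝ)) ∧
        ‖(Hs : Matrix (Fin d) (Fin d) ℝ) - 1‖ ≤ C * dSFT lam x y ^ β) ∧
      ∀ n : ℕ,
        ‖(((coc A y n)⁻¹ * coc A x n : GL (Fin d) ℝ) : Matrix (Fin d) (Fin d) ℝ) - 1‖
          ≤ C * dSFT lam x y ^ β := by
  obtain ⟨C, r, hr, hstep⟩ := exists_dist_holonomyApprox_le_geometric hlam0 hlam1 hc₀.le hβ0
    hHolder hgrowth
  refine ⟨C / (1 - r), fun x hx y hy hxy => ?_⟩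
  have hstep_xy := hstep x hx y hy hxy
  obtain ⟨L, hL⟩ := cauchySeq_tendsto_of_complete (cauchySeq_of_le_geometric _ _ hr hstep_xy)
  obtain ⟨L', hL'⟩ := cauchySeq_tendsto_of_complete
    (cauchySeq_of_le_geometric _ _ hr (hstep y hy x hx fun i hi => (hxy i hi).symm))
  obtain ⟨Hs, rfl⟩ := Units.exists_val_eq_of_tendsto hL (by simpa only [holonomyApprox_inv])
  have hzero : ((holonomyApprox A x y 0 : GL (Fin d) ℝ) : Matrix (Fin d) (Fin d) ℝ) = 1 := by
    rw [holonomyApprox_zero, Units.val_one]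
  rw [div_mul_eq_mul_div₀]
  refine ⟨⟨Hs, hL, ?_⟩, fun n => ?_⟩
  · rw [← dist_eq_norm', ← hzero]
    exact dist_le_of_le_geometric_of_tendsto₀ _ _ hr hstep_xy hL
  · rw [← dist_eq_norm', ← hzero]
    exact dist_le_of_le_geometric hr hstep_xy n

/-- Existence and Hölder estimates of stable holonomies for a β-Hölder `GL(d,ℝ)`-valued
cocycle with sub-exponential growth over a subshift of finite type (Proposition 3.3). -/
theorem stmt_9 (k d : ℕ) (hk : 1 ≤ k) (M : Matrix (Fin k) (Fin k) ℕ)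
    (hM : ∀ i j, M i j = 0 ∨ M i j = 1)
    (lam : ℝ) (hlam0 : 0 < lam) (hlam1 : lam < 1)
    (A : (ℤ → Fin k) → GL (Fin d) ℝ)
    (c₀ β : ℝ) (hc₀ : 0 < c₀) (hβ0 : 0 < β) (hβ1 : β ≤ 1)
    (hHolder : ∀ x ∈ SFT M, ∀ y ∈ SFT M,
      ‖(A x : Matrix (Fin d) (Fin d) ℝ) - (A y : Matrix (Fin d) (Fin d) ℝ)‖
        ≤ c₀ * dSFT lam x y ^ β)
    (hgrowth : ∀ ε : ℝ, 0 < ε → ∃ K : ℝ, 1 ≤ K ∧ ∀ x ∈ SFT M, ∀ n : ℕ,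
      ‖(coc A x n : Matrix (Fin d) (Fin d) ℝ)‖ ≤ K * Real.exp (ε * n) ∧
      ‖(((coc A x n)⁻¹ : GL (Fin d) ℝ) : Matrix (Fin d) (Fin d) ℝ)‖ ≤ K * Real.exp (ε * n)) :
    ∃ C : ℝ, ∀ x ∈ SFT M, ∀ y ∈ SFT M, (∀ i : ℤ, 0 ≤ i → y i = x i) →
      (∃ Hs : GL (Fin d) ℝ,
        Filter.Tendsto
          (fun n : ℕ => (((coc A y n)⁻¹ * coc A x n : GL (Fin d) ℝ) : Matrix (Fin d) (Fin d) ℝ))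
          Filter.atTop (nhds (Hs : Matrix (Fin d) (Fin d) ℝ)) ∧
        ‖(Hs : Matrix (Fin d) (Fin d) ℝ) - 1‖ ≤ C * dSFT lam x y ^ β) ∧
      ∀ n : ℕ,
        ‖(((coc A y n)⁻¹ * coc A x n : GL (Fin d) ℝ) : Matrix (Fin d) (Fin d) ℝ) - 1‖
          ≤ C * dSFT lam x y ^ β :=
  stmt_9_general k d M lam hlam0 hlam1 A c₀ β hc₀ hβ0 hHolder hgrowth
end
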